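/- For every real E with |E| ≤ 1.8 and E ≠ ±2, the function g : ℝ → ℝ defined by g(t) = ½ Re((ℰ + t)²) + ln|ℰ̄ − t| attains its global minimum uniquely at t = 0; equivalently, the function F₁(t) = e^{−g(t)} (the modulus of the integrand e^{−f₁} along the shifted contour a = ℰ + t) has a unique global maximum, located at t = 0. -/

import Mathlib

open scoped BigOperators Topology
open Matrix MeasureTheory Filter

noncomputable section

/-- `ℰ = E/2 - i√(1 - E²/4)`. -/
def calE (E : ℝ) : ℂ := ((E / 2 : ℝ) : ℂ) - (Real.sqrt (1 - E ^ 2 / 4) : ℝ) * Complex.I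
/-- `ℰ̄ = E - ℰ = E/2 + i√(1 - E²/4)`, the complex conjugate of `ℰ`. -/
def calEbar (E : ℝ) : ℂ := ((E / 2 : ℝ) : ℂ) + (Real.sqrt (1 - E ^ 2 / 4) : ℝ) * Complex.I

/-- `g(t) = ½ Re((ℰ + t)²) + ln|ℰ̄ - t|`, the modulus exponent of the integrand along the
shifted contour `a = ℰ + t`. -/
def saddleG (E t : ℝ) : ℝ :=
  (1 / 2) * (((calE E + (t : ℂ)) ^ 2).re) + Real.log ‖calEbar E - (t : ℂ)‖

/-- Explicit real formula for `saddleG`. -/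
lemma saddleG_eq_aux (E t : ℝ) (hE : E^2 ≤ 3.24) :
    saddleG E t = (1/2) * ((E/2+t)^2 - (1 - E^2/4)) + Real.log (1 + t^2 - E*t) / 2 := by
  have h4 : (0:ℝ) ≤ 1 - E^2/4 := by nlinarith
  have hs : Real.sqrt (1 - E^2/4) ^ 2 = 1 - E^2/4 := Real.sq_sqrt h4
  have hre : (((calE E + (t : ℂ)) ^ 2).re) = (E/2+t)^2 - (1 - E^2/4) := by
    rw [← hs]
    simp [calE, pow_two, Complex.add_re, Complex.sub_re, Complex.mul_re, Complex.add_im,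
      Complex.sub_im, Complex.mul_im]
  have habs : ‖calEbar E - (t : ℂ)‖ = Real.sqrt (1 + t^2 - E*t) := by
    rw [Complex.norm_def, Complex.normSq_apply]
    congr 1
    have : Real.sqrt (1 - E^2/4) * Real.sqrt (1 - E^2/4) = 1 - E^2/4 := by
      rw [← pow_two]; exact hs
    simp [calEbar, Complex.sub_re, Complex.add_re, Complex.mul_re, Complex.sub_im,
      Complex.add_im, Complex.mul_im]
    nlinarith [this]
  have hq : (0:ℝ) ≤ 1 + t^2 - E*t := by nlinarith [sq_nonneg (t - E/2)]
  rw [saddleG, hre, habs, Real.log_sqrt hq]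

lemma saddleG_qpos (E t : ℝ) (hE : E^2 ≤ 3.24) : (0:ℝ) < 1 + t^2 - E*t := by
  nlinarith [sq_nonneg (t - E/2)]

lemma saddleG_hderiv (E t : ℝ) (hE : E^2 ≤ 3.24) :
    HasDerivAt (fun t : ℝ => t^2 + E*t + Real.log (1 + t^2 - E*t))
      (2*t + E + (2*t - E) * (1 + t^2 - E*t)⁻¹) t := by
  have hq := saddleG_qpos E t hE
  have h1 : HasDerivAt (fun t : ℝ => 1 + t^2 - E*t) (2*t - E) t := by
    have := ((hasDerivAt_pow 2 t).const_add 1).sub ((hasDerivAt_id t).const_mul E)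
    simpa [Pi.sub_def, Pi.add_def] using this
  have h2 : HasDerivAt (fun t : ℝ => Real.log (1 + t^2 - E*t))
      ((1 + t^2 - E*t)⁻¹ * (2*t - E)) t :=
    by have := (Real.hasDerivAt_log (ne_of_gt hq)).comp t h1; exact this
  have h3 : HasDerivAt (fun t : ℝ => t^2 + E*t) (2*t + E) t := by
    have := (hasDerivAt_pow 2 t).add ((hasDerivAt_id t).const_mul E)
    simpa [Pi.sub_def, Pi.add_def] using this
  have := h3.add h2
  exact this.congr_deriv (by ring)

lemma saddleG_derivsign (E x : ℝ) (hE : E^2 ≤ 3.24) (hx : 0 < x) :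
    0 < 2*x + E + (2*x - E) * (1 + x^2 - E*x)⁻¹ := by
  have hq := saddleG_qpos E x hE
  rw [show 2*x + E + (2*x - E) * (1 + x^2 - E*x)⁻¹
      = (x * (4 + 2*x^2 - E*x - E^2)) * (1 + x^2 - E*x)⁻¹ by
    linear_combination (-(2*x+E)) * mul_inv_cancel₀ hq.ne']
  have : 0 < 4 + 2*x^2 - E*x - E^2 := by nlinarith [sq_nonneg (x - E/4)]
  positivity

lemma saddleG_derivsign' (E x : ℝ) (hE : E^2 ≤ 3.24) (hx : x < 0) :
    2*x + E + (2*x - E) * (1 + x^2 - E*x)⁻¹ < 0 := by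
  have hq := saddleG_qpos E x hE
  rw [show 2*x + E + (2*x - E) * (1 + x^2 - E*x)⁻¹
      = (x * (4 + 2*x^2 - E*x - E^2)) * (1 + x^2 - E*x)⁻¹ by
    linear_combination (-(2*x+E)) * mul_inv_cancel₀ hq.ne']
  have h1 : 0 < 4 + 2*x^2 - E*x - E^2 := by nlinarith [sq_nonneg (x - E/4)]
  have : x * (4 + 2*x^2 - E*x - E^2) < 0 := mul_neg_of_neg_of_pos hx h1
  exact mul_neg_of_neg_of_pos this (inv_pos.mpr hq)

lemma saddleG_hmain (E t : ℝ) (hE : E^2 ≤ 3.24) (ht : t ≠ 0) :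
    0 < t^2 + E*t + Real.log (1 + t^2 - E*t) := by
  set h : ℝ → ℝ := fun t => t^2 + E*t + Real.log (1 + t^2 - E*t) with hh
  have hdiff : Differentiable ℝ h := fun x => (saddleG_hderiv E x hE).differentiableAt
  have hd : ∀ x : ℝ, deriv h x = 2*x + E + (2*x - E) * (1 + x^2 - E*x)⁻¹ :=
    fun x => (saddleG_hderiv E x hE).deriv
  have h0 : h 0 = 0 := by simp [hh]
  have key : h 0 < h t := by
    rcases ht.lt_or_gt with hlt | hgt
    · have := strictAntiOn_of_deriv_neg (convex_Iic (0:ℝ)) hdiff.continuous.continuousOn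
        (fun x hx => by
          rw [hd x]
          exact saddleG_derivsign' E x hE (by simpa using hx))
      exact this (Set.mem_Iic.mpr hlt.le) (Set.mem_Iic.mpr le_rfl) hlt
    · have := strictMonoOn_of_deriv_pos (convex_Ici (0:ℝ)) hdiff.continuous.continuousOn
        (fun x hx => by
          rw [hd x]
          exact saddleG_derivsign E x hE (by simpa using hx))
      exact this (Set.mem_Ici.mpr le_rfl) (Set.mem_Ici.mpr hgt.le) hgt
  rw [h0] at key
  exact key

/-- For `|E| ≤ 1.8`, `E ≠ ±2`, the function `g` attains its global minimum
uniquely at `t = 0` (equivalently, `F₁ = e^{-g}` has a unique global maximum at `t = 0`). -/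
theorem first_saddle_unique (E : ℝ) (hE : |E| ≤ 1.8) (h2 : E ≠ 2) (h2' : E ≠ -2) :
    ∀ t : ℝ, t ≠ 0 → saddleG E 0 < saddleG E t := by
  intro t ht
  have hE2 : E^2 ≤ 3.24 := by
    obtain ⟨h1, h2⟩ := abs_le.mp hE
    nlinarith
  rw [saddleG_eq_aux E 0 hE2, saddleG_eq_aux E t hE2]
  have hpos := saddleG_hmain E t hE2 ht
  have hlog0 : Real.log (1 + (0:ℝ)^2 - E*0) = 0 := by norm_num
  rw [hlog0]
  nlinarith [hpos]
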